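/- Let t ∈ (0, 1/2]. Then inf over λ > 0 of [C(λ)·t + λ·(1 - t)] = t + t·ln(1/(2t)), where C(λ) = λ - ln(2λ) for 0 < λ ≤ 1/2 and C(λ) = (1/2)e^{1-2λ} for λ ≥ 1/2. Moreover t + t·ln(1/(2t)) ≤ t·ln(e/(2t)), with equality. -/

import Mathlib

/-! The objective equals `l - t log (2l)` for `l ≤ 1/2`, and its excess over the value at `l = t`
is `l - t - t log (l / t) ≥ 0` by `log x ≤ x - 1`. For `l > 1/2`, `exp u ≥ 1 + u` bounds it below
by `t + l (1 - 2t) ≥ 1/2`, which is the objective at `l = 1/2`. -/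

noncomputable def Cfun (l : ℝ) : ℝ :=
  if l ≤ 1/2 then l - Real.log (2*l) else (1/2) * Real.exp (1 - 2*l)

open Real

noncomputable def ehObjective (t l : ℝ) : ℝ := Cfun l * t + l * (1 - t)

lemma Cfun_of_le {l : ℝ} (hl : l ≤ 1/2) : Cfun l = l - log (2*l) := if_pos hl

lemma Cfun_of_lt {l : ℝ} (hl : 1/2 < l) : Cfun l = (1/2) * exp (1 - 2*l) := if_neg hl.not_ge

lemma mul_log_div_le_sub {t l : ℝ} (ht : 0 < t) (hl : 0 < l) : t * log (l / t) ≤ l - t := by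
  calc t * log (l / t) ≤ t * (l / t - 1) :=
        mul_le_mul_of_nonneg_left (log_le_sub_one_of_pos (by positivity)) ht.le
    _ = l - t := by field_simp

lemma ehObjective_of_le_half {t l : ℝ} (hl : l ≤ 1/2) :
    ehObjective t l = l - t * log (2*l) := by
  rw [ehObjective, Cfun_of_le hl]; ring

lemma ehObjective_self {t : ℝ} (ht : t ≤ 1/2) :
    ehObjective t t = t + t * log (1/(2*t)) := by
  rw [ehObjective_of_le_half ht, one_div, log_inv]; ring

lemma ehObjective_self_le_of_le_half {t l : ℝ} (ht0 : 0 < t) (ht : t ≤ 1/2) (hl0 : 0 < l)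
    (hl : l ≤ 1/2) : ehObjective t t ≤ ehObjective t l := by
  have hlog : log (2*l) - log (2*t) = log (l / t) := by
    rw [← log_div (by positivity) (by positivity), mul_div_mul_left _ _ two_ne_zero]
  rw [ehObjective_of_le_half ht, ehObjective_of_le_half hl]
  nlinarith [mul_log_div_le_sub ht0 hl0]

lemma ehObjective_half_le_of_half_lt {t l : ℝ} (ht0 : 0 ≤ t) (ht : t ≤ 1/2) (hl : 1/2 < l) :
    ehObjective t (1/2) ≤ ehObjective t l := by
  have hexp : (1/2) * (2 - 2*l) * t ≤ (1/2) * exp (1 - 2*l) * t := by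
    gcongr; linarith [add_one_le_exp (1 - 2*l)]
  have hhalf : ehObjective t (1/2) = 1/2 := by
    rw [ehObjective_of_le_half le_rfl]; norm_num
  rw [hhalf, ehObjective, Cfun_of_lt hl]
  nlinarith [mul_nonneg (sub_nonneg.2 hl.le) (sub_nonneg.2 ht)]

lemma add_mul_log_one_div_eq {t : ℝ} (ht : t ≠ 0) :
    t + t * log (1/(2*t)) = t * log (exp 1/(2*t)) := by
  rw [log_div (exp_ne_zero 1) (mul_ne_zero two_ne_zero ht), log_exp, one_div, log_inv]
  ring

theorem optimize_EH (t : ℝ) (ht0 : 0 < t) (ht : t ≤ 1/2) :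
    IsLeast ((fun l : ℝ => Cfun l * t + l * (1 - t)) '' Set.Ioi 0)
      (t + t * Real.log (1/(2*t))) ∧
    t + t * Real.log (1/(2*t)) = t * Real.log (Real.exp 1/(2*t)) := by
  refine ⟨⟨⟨t, ht0, ehObjective_self ht⟩, ?_⟩, add_mul_log_one_div_eq ht0.ne'⟩
  rintro _ ⟨l, hl0, rfl⟩
  rw [← ehObjective_self ht]
  rcases le_or_gt l (1/2) with hl | hl
  · exact ehObjective_self_le_of_le_half ht0 ht hl0 hl
  · exact (ehObjective_self_le_of_le_half ht0 ht one_half_pos le_rfl).trans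
      (ehObjective_half_le_of_half_lt ht0.le ht hl)
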